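/- Let (N, m0, l, A) be a bounded labeled Petri net system with transitions partitioned into explicit transitions T_E and implicit transitions T_I such that the T_I-induced subnet is acyclic, and let G be its basis reachability graph. Then φ(L(G)) = P_E(L(N, m0)), i.e., the set of sequences φ(σ) over σ ∈ L(G) coincides with the projection over T_E of the set of firing sequences of (N, m0). -/

import Mathlib

open scoped BigOperators

/-- A Petri net on places `P` and transitions `T`, given by its `Pre` and `Post` matrices. -/
structure PetriNet (P T : Type) where
  Pre : P → T → ℕ
  Post : P → T → ℕ

namespace PetriNet

variable {P T A : Type}

/-- Incidence matrix `[N] = Post - Pre` (with values in ℤ). -/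
def inc (N : PetriNet P T) (p : P) (t : T) : ℤ :=
  (N.Post p t : ℤ) - (N.Pre p t : ℤ)

/-- Transition `t` is enabled at marking `m`. -/
def enabled (N : PetriNet P T) (m : P → ℕ) (t : T) : Prop :=
  ∀ p, N.Pre p t ≤ m p

/-- Marking obtained by firing `t` at `m`. -/
def fire (N : PetriNet P T) (m : P → ℕ) (t : T) : P → ℕ :=
  fun p => m p - N.Pre p t + N.Post p t

/-- `FireSeq N m s m'` means the sequence `s` is enabled at `m` and its firing yields `m'`,
written `m[s⟩m'`. -/
inductive FireSeq (N : PetriNet P T) : (P → ℕ) → List T → (P → ℕ) → Prop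
  | nil (m : P → ℕ) : FireSeq N m [] m
  | cons {m m' : P → ℕ} {t : T} {s : List T} :
      N.enabled m t → FireSeq N (N.fire m t) s m' → FireSeq N m (t :: s) m'

/-- `L(N, m0)`: the set of firing sequences enabled at `m0`. -/
def lang (N : PetriNet P T) (m0 : P → ℕ) : Set (List T) :=
  {s | ∃ m', N.FireSeq m0 s m'}

/-- `R(N, m0)`: the set of markings reachable from `m0`. -/
def reach (N : PetriNet P T) (m0 : P → ℕ) : Set (P → ℕ) :=
  {m | ∃ s, N.FireSeq m0 s m}

/-- A Petri net system is bounded if reachable markings are uniformly bounded. -/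
def Bounded (N : PetriNet P T) (m0 : P → ℕ) : Prop :=
  ∃ k : ℕ, ∀ m ∈ N.reach m0, ∀ p, m p ≤ k

/-- The `TL`-induced subnet: same places, transitions restricted to `TL`. -/
def restrict (N : PetriNet P T) (TL : Set T) : PetriNet P {t // t ∈ TL} where
  Pre := fun p t => N.Pre p t.1
  Post := fun p t => N.Post p t.1

/-- Parikh vector of a sequence. -/
def parikh [DecidableEq T] (s : List T) : T → ℕ := fun t => s.count t

/-- Projection of a sequence onto a subset `TL` of transitions (erasing the others). -/
def projSeq (TL : Set T) [DecidablePred (· ∈ TL)] (s : List T) : List T :=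
  s.filter (fun t => decide (t ∈ TL))

/-- Σ(m,t): explanations of `t` at `m`, i.e. sequences of implicit (`TI`) transitions whose
firing at `m` enables `t`. -/
def explanations (N : PetriNet P T) (TI : Set T) (m : P → ℕ) (t : T) : Set (List T) :=
  {s | (∀ u ∈ s, u ∈ TI) ∧ ∃ m', N.FireSeq m s m' ∧ N.enabled m' t}

/-- Y(m,t): e-vectors, Parikh vectors of explanations. -/
def eVectors [DecidableEq T] (N : PetriNet P T) (TI : Set T) (m : P → ℕ) (t : T) :
    Set (T → ℕ) :=
  parikh '' N.explanations TI m t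

/-- Y_min(m,t): componentwise-minimal e-vectors. -/
def eVectorsMin [DecidableEq T] (N : PetriNet P T) (TI : Set T) (m : P → ℕ) (t : T) :
    Set (T → ℕ) :=
  {y ∈ N.eVectors TI m t | ∀ y' ∈ N.eVectors TI m t, y' ≤ y → y' = y}

/-- Σ_min(m,t): explanations with no explanation of strictly smaller Parikh vector. -/
def explanationsMin [DecidableEq T] (N : PetriNet P T) (TI : Set T) (m : P → ℕ) (t : T) :
    Set (List T) :=
  {s ∈ N.explanations TI m t |
    ¬ ∃ s' ∈ N.explanations TI m t, parikh s' ≤ parikh s ∧ parikh s' ≠ parikh s}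

/-- Paths of the basis reachability graph: `(m,(t,y),m')` is an arc whenever `t ∈ TE`,
`y ∈ Y_min(m,t)` and `m' = m + [N]_I·y + [N](·,t)` (the vector `y` is supported on `TI`,
so the sum over all transitions equals the sum over `TI`). -/
inductive BrgPath [DecidableEq T] [Fintype T] (N : PetriNet P T) (TE TI : Set T) :
    (P → ℕ) → List (T × (T → ℕ)) → (P → ℕ) → Prop
  | nil (m : P → ℕ) : BrgPath N TE TI m [] m
  | cons {m m' m'' : P → ℕ} {t : T} {y : T → ℕ} {σ : List (T × (T → ℕ))} :
      t ∈ TE → y ∈ N.eVectorsMin TI m t →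
      (∀ p, (m' p : ℤ) = (m p : ℤ) + (∑ u, (y u : ℤ) * N.inc p u) + N.inc p t) →
      BrgPath N TE TI m' σ m'' → BrgPath N TE TI m ((t, y) :: σ) m''

/-- `L(G)`: the language of the basis reachability graph. -/
def brgLang [DecidableEq T] [Fintype T] (N : PetriNet P T) (TE TI : Set T) (m0 : P → ℕ) :
    Set (List (T × (T → ℕ))) :=
  {σ | ∃ m', BrgPath N TE TI m0 σ m'}

/-- The set of basis markings: states of the BRG reachable from `m0`. -/
def brgStates [DecidableEq T] [Fintype T] (N : PetriNet P T) (TE TI : Set T) (m0 : P → ℕ) :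
    Set (P → ℕ) :=
  {m | ∃ σ, BrgPath N TE TI m0 σ m}

/-- φ(σ): concatenation of the first entries of the arcs of σ. -/
def phi (σ : List (T × (T → ℕ))) : List T := σ.map Prod.fst

/-- φ'(σ): sum of the second entries of the arcs of σ. -/
def phi' (σ : List (T × (T → ℕ))) : T → ℕ := (σ.map Prod.snd).sum

/-- Arcs of the directed bipartite graph of the `TI`-induced subnet on `P ⊕ T`. -/
def subnetArc (N : PetriNet P T) (TI : Set T) : (P ⊕ T) → (P ⊕ T) → Prop
  | Sum.inl p, Sum.inr t => t ∈ TI ∧ 0 < N.Pre p t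
  | Sum.inr t, Sum.inl p => t ∈ TI ∧ 0 < N.Post p t
  | _, _ => False

/-- The `TI`-induced subnet is acyclic: no cycle in its directed bipartite graph. -/
def SubnetAcyclic (N : PetriNet P T) (TI : Set T) : Prop :=
  ∀ x : P ⊕ T, ¬ Relation.TransGen (N.subnetArc TI) x x

/-- `L(N_L, m0)` viewed as a set of sequences over `T` (via the inclusion `T_L ↪ T`). -/
def lowLang (N : PetriNet P T) (TL : Set T) (m0 : P → ℕ) : Set (List T) :=
  (fun s => s.map Subtype.val) '' (N.restrict TL).lang m0

/-- `l_L(L(N_L, m0))`: the label language of the low-level subnet system. -/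
def lowLabelLang (N : PetriNet P T) (l : T → A) (TL : Set T) (m0 : P → ℕ) : Set (List A) :=
  (fun s => s.map fun t => l t.1) '' (N.restrict TL).lang m0

/-- SNNI: `l(P_L(L(N,m0))) = l_L(L(N_L,m0))`, where `T_L = {t | l t ∈ A_L}`. -/
def SNNI (N : PetriNet P T) (m0 : P → ℕ) (l : T → A) (AL : Set A)
    [DecidablePred fun t => l t ∈ AL] : Prop :=
  (fun s => (s.filter fun t => decide (l t ∈ AL)).map l) '' N.lang m0 =
    N.lowLabelLang l {t | l t ∈ AL} m0

end PetriNet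

/-!
A BRG arc `(t, y)` at `m` is realized in the net by an explanation of `t` with Parikh vector `y`
followed by `t`; this gives `φ(L(G)) ⊆ P_E(L(N, m0))`. Conversely, along a firing sequence we
keep a basis marking `mb` and the vector `z` of implicit transitions fired since, so that the
current marking is `mb + [N]·z`. Since the implicit subnet is acyclic, every vector supported on
`T_I` that satisfies the state equation with a nonnegative result is the Parikh vector of a
firing sequence: fire first a transition of its support that no other transition of the support
feeds. Hence, when an explicit `t` fires, `z` is an e-vector of `t` at `mb`; a minimal e-vector
`y ≤ z` yields the next BRG arc and leaves `z - y` pending.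
-/

namespace PetriNet

variable {P T : Type} {N : PetriNet P T} {TI : Set T}

lemma cast_fire_apply {m : P → ℕ} {t : T} (h : N.enabled m t) (p : P) :
    (N.fire m t p : ℤ) = m p + N.inc p t := by
  simp only [fire, inc]
  push_cast [Nat.cast_sub (h p)]
  ring

lemma FireSeq.append {m m₁ m₂ : P → ℕ} {s₁ s₂ : List T}
    (h₁ : N.FireSeq m s₁ m₁) (h₂ : N.FireSeq m₁ s₂ m₂) : N.FireSeq m (s₁ ++ s₂) m₂ := by
  induction h₁ with
  | nil => exact h₂
  | cons hen _ ih => exact .cons hen (ih h₂)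

lemma projSeq_cons_of_mem {TL : Set T} [DecidablePred (· ∈ TL)] {t : T} (ht : t ∈ TL)
    (s : List T) : projSeq TL (t :: s) = t :: projSeq TL s :=
  List.filter_cons_of_pos (by simpa using ht)

lemma projSeq_cons_of_notMem {TL : Set T} [DecidablePred (· ∈ TL)] {t : T} (ht : t ∉ TL)
    (s : List T) : projSeq TL (t :: s) = projSeq TL s :=
  List.filter_cons_of_neg (by simpa using ht)

lemma projSeq_append (TL : Set T) [DecidablePred (· ∈ TL)] (s₁ s₂ : List T) :
    projSeq TL (s₁ ++ s₂) = projSeq TL s₁ ++ projSeq TL s₂ :=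
  List.filter_append ..

lemma projSeq_eq_nil {TL : Set T} [DecidablePred (· ∈ TL)] {s : List T}
    (h : ∀ u ∈ s, u ∉ TL) : projSeq TL s = [] :=
  List.filter_eq_nil_iff.mpr fun u hu => by simpa using h u hu

def effect [Fintype T] (N : PetriNet P T) (y : T → ℕ) (p : P) : ℤ :=
  ∑ u, (y u : ℤ) * N.inc p u

@[simp]
lemma effect_zero [Fintype T] (p : P) : N.effect 0 p = 0 := by
  simp [effect]

lemma effect_add [Fintype T] (y z : T → ℕ) (p : P) :
    N.effect (y + z) p = N.effect y p + N.effect z p := by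
  simp [effect, add_mul, Finset.sum_add_distrib]

lemma effect_single [Fintype T] [DecidableEq T] (t : T) (p : P) :
    N.effect (Pi.single t 1) p = N.inc p t := by
  simp [effect, Pi.single_apply]

lemma parikh_nil [DecidableEq T] : parikh ([] : List T) = 0 :=
  rfl

lemma parikh_cons [DecidableEq T] (t : T) (s : List T) :
    parikh (t :: s) = parikh s + Pi.single t 1 := by
  funext u
  by_cases h : u = t
  · subst h; simp [parikh]
  · simp [parikh, h, Ne.symm h]

lemma FireSeq.cast_apply [Fintype T] [DecidableEq T] {m m' : P → ℕ} {s : List T}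
    (h : N.FireSeq m s m') (p : P) :
    (m' p : ℤ) = m p + N.effect (parikh s) p := by
  induction h with
  | nil => simp [parikh_nil]
  | cons hen _ ih =>
    rw [ih, parikh_cons, effect_add, effect_single, cast_fire_apply hen]
    ring

lemma enabled_of_effect_nonneg [Fintype T] {m : P → ℕ} {y : T → ℕ} {t : T} (ht : y t ≠ 0)
    (hpost : ∀ p u, 0 < N.Pre p t → y u ≠ 0 → N.Post p u = 0)
    (hm : ∀ p, 0 ≤ (m p : ℤ) + N.effect y p) : N.enabled m t := by
  intro p
  rcases (N.Pre p t).eq_zero_or_pos with h0 | hpos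
  · simp [h0]
  have heffect : N.effect y p = -∑ u, (y u : ℤ) * N.Pre p u := by
    rw [effect, ← Finset.sum_neg_distrib]
    refine Finset.sum_congr rfl fun u _ => ?_
    rcases eq_or_ne (y u) 0 with hu | hu
    · simp [hu]
    · simp [inc, hpost p u hpos hu]
  have hle : (y t : ℤ) * N.Pre p t ≤ ∑ u, (y u : ℤ) * N.Pre p u :=
    Finset.single_le_sum (f := fun u => (y u : ℤ) * N.Pre p u) (fun u _ => by positivity)
      (Finset.mem_univ t)
  have hyt : (1 : ℤ) ≤ y t := by exact_mod_cast Nat.one_le_iff_ne_zero.mpr ht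
  have hmp := hm p
  have : (N.Pre p t : ℤ) ≤ m p := by nlinarith
  exact_mod_cast this

lemma SubnetAcyclic.wellFounded [Finite T] (hacyc : N.SubnetAcyclic TI) :
    WellFounded fun u v : T => Relation.TransGen (N.subnetArc TI) (.inr u) (.inr v) := by
  have : Std.Irrefl fun u v : T => Relation.TransGen (N.subnetArc TI) (.inr u) (.inr v) :=
    ⟨fun u => hacyc (.inr u)⟩
  have : IsTrans T fun u v => Relation.TransGen (N.subnetArc TI) (.inr u) (.inr v) :=
    ⟨fun _ _ _ => Relation.TransGen.trans⟩
  exact Finite.wellFounded_of_trans_of_irrefl _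

lemma SubnetAcyclic.exists_source [Finite T] (hacyc : N.SubnetAcyclic TI) {y : T → ℕ}
    (hsupp : ∀ u, y u ≠ 0 → u ∈ TI) (hy : y ≠ 0) :
    ∃ t, y t ≠ 0 ∧ ∀ p u, 0 < N.Pre p t → y u ≠ 0 → N.Post p u = 0 := by
  obtain ⟨t, ht, hmin⟩ := hacyc.wellFounded.has_min {u | y u ≠ 0} (Function.ne_iff.mp hy)
  refine ⟨t, ht, fun p u hpre hu => Nat.eq_zero_of_not_pos fun hpost => hmin u hu ?_⟩
  exact .head (show N.subnetArc TI (.inr u) (.inl p) from ⟨hsupp u hu, hpost⟩)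
    (.single (show N.subnetArc TI (.inl p) (.inr t) from ⟨hsupp t ht, hpre⟩))

theorem SubnetAcyclic.exists_fireSeq [Fintype T] [DecidableEq T] (hacyc : N.SubnetAcyclic TI)
    (y : T → ℕ) (hsupp : ∀ u, y u ≠ 0 → u ∈ TI) (m : P → ℕ)
    (hm : ∀ p, 0 ≤ (m p : ℤ) + N.effect y p) :
    ∃ s m', (∀ u ∈ s, u ∈ TI) ∧ parikh s = y ∧ N.FireSeq m s m' := by
  induction y using WellFoundedLT.induction generalizing m with
  | ind y ih =>
    rcases eq_or_ne y 0 with rfl | hy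
    · exact ⟨[], m, by simp, parikh_nil, .nil m⟩
    obtain ⟨t, ht, hpost⟩ := hacyc.exists_source hsupp hy
    have hen := enabled_of_effect_nonneg ht hpost hm
    have hsingle : Pi.single t 1 ≤ y := fun u => by
      rcases eq_or_ne u t with rfl | hne <;> simp [*, Nat.one_le_iff_ne_zero]
    obtain ⟨y', rfl⟩ : ∃ y' : T → ℕ, y = y' + Pi.single t 1 :=
      ⟨_, (tsub_add_cancel_of_le hsingle).symm⟩
    have hm' : ∀ p, 0 ≤ (N.fire m t p : ℤ) + N.effect y' p := fun p => by
      have := hm p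
      rw [effect_add, effect_single] at this
      rw [cast_fire_apply hen]
      linarith
    obtain ⟨s, m', hsTI, rfl, hs⟩ := ih y' (lt_add_of_pos_right y' (by simp))
      (fun u hu => hsupp u (by simp [hu])) (N.fire m t) hm'
    refine ⟨t :: s, m', ?_, parikh_cons t s, .cons hen hs⟩
    rintro u (_ | ⟨_, hu⟩)
    exacts [hsupp t ht, hsTI u hu]

lemma exists_mem_eVectorsMin_le [Finite T] [DecidableEq T] {m : P → ℕ} {t : T} {z : T → ℕ}
    (hz : z ∈ N.eVectors TI m t) : ∃ y ∈ N.eVectorsMin TI m t, y ≤ z := by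
  obtain ⟨y, ⟨hyY, hyz⟩, hmin⟩ :=
    wellFounded_lt.has_min {y | y ∈ N.eVectors TI m t ∧ y ≤ z} ⟨z, hz, le_rfl⟩
  refine ⟨y, ⟨hyY, fun y' hy' hle => ?_⟩, hyz⟩
  by_contra hne
  exact hmin y' ⟨hy', hle.trans hyz⟩ (lt_of_le_of_ne hle hne)

lemma exists_target_of_mem_eVectors [Fintype T] [DecidableEq T] {m : P → ℕ} {t : T}
    {y : T → ℕ} (hy : y ∈ N.eVectors TI m t) :
    ∃ m' : P → ℕ, ∀ p, (m' p : ℤ) = m p + N.effect y p + N.inc p t := by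
  obtain ⟨s, ⟨-, M, hs, hen⟩, rfl⟩ := hy
  exact ⟨N.fire M t, fun p => by rw [cast_fire_apply hen, hs.cast_apply]⟩

lemma exists_mem_eVectorsMin_le_of_enabled [Fintype T] [DecidableEq T]
    (hacyc : N.SubnetAcyclic TI) {m mb : P → ℕ} {z : T → ℕ} {t : T}
    (hz : ∀ u, z u ≠ 0 → u ∈ TI) (heq : ∀ p, (m p : ℤ) = mb p + N.effect z p)
    (hen : N.enabled m t) : ∃ y ∈ N.eVectorsMin TI mb t, y ≤ z := by
  obtain ⟨s, M, hsTI, hz', hs⟩ :=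
    hacyc.exists_fireSeq z hz mb fun p => heq p ▸ Int.natCast_nonneg _
  have hM : M = m := funext fun p => by
    have := hs.cast_apply p
    rw [hz'] at this
    exact_mod_cast this.trans (heq p).symm
  exact exists_mem_eVectorsMin_le ⟨s, ⟨hsTI, M, hs, hM ▸ hen⟩, hz'⟩

lemma BrgPath.exists_fireSeq [Fintype T] [DecidableEq T] {TE : Set T} [DecidablePred (· ∈ TE)]
    (hdisj : Disjoint TE TI) {m m' : P → ℕ} {σ : List (T × (T → ℕ))}
    (h : N.BrgPath TE TI m σ m') : ∃ s, N.FireSeq m s m' ∧ projSeq TE s = phi σ := by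
  induction h with
  | nil m => exact ⟨[], .nil m, rfl⟩
  | @cons m m' m'' t y σ ht hy heq _ ih =>
    obtain ⟨sI, ⟨hsI, M, hM, hen⟩, rfl⟩ := hy.1
    obtain ⟨s, hs, hproj⟩ := ih
    have hfire : N.fire M t = m' := funext fun p => by
      have hMp := hM.cast_apply p
      rw [effect] at hMp
      have := cast_fire_apply hen p
      exact_mod_cast (by linarith [heq p] : (N.fire M t p : ℤ) = m' p)
    refine ⟨sI ++ t :: s, hM.append (.cons hen (hfire ▸ hs)), ?_⟩
    rw [projSeq_append, projSeq_eq_nil fun u hu => hdisj.notMem_of_mem_right (hsI u hu),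
      projSeq_cons_of_mem ht, hproj]
    rfl

lemma FireSeq.exists_brgPath [Fintype T] [DecidableEq T] {TE : Set T} [DecidablePred (· ∈ TE)]
    (hcover : TE ∪ TI = Set.univ) (hacyc : N.SubnetAcyclic TI) {m m' : P → ℕ} {s : List T}
    (hs : N.FireSeq m s m') {mb : P → ℕ} {z : T → ℕ} (hz : ∀ u, z u ≠ 0 → u ∈ TI)
    (heq : ∀ p, (m p : ℤ) = mb p + N.effect z p) :
    ∃ σ m'', N.BrgPath TE TI mb σ m'' ∧ phi σ = projSeq TE s := by
  induction hs generalizing mb z with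
  | nil m => exact ⟨[], mb, .nil mb, rfl⟩
  | @cons m m' t s hen _ ih =>
    by_cases htE : t ∈ TE
    · obtain ⟨y, hy, hyz⟩ := exists_mem_eVectorsMin_le_of_enabled hacyc hz heq hen
      obtain ⟨mb', hmb'⟩ := exists_target_of_mem_eVectors hy.1
      have hzy := N.effect_add (z - y) y
      rw [tsub_add_cancel_of_le hyz] at hzy
      obtain ⟨σ, m'', hσ, hphi⟩ := ih (mb := mb') (z := z - y)
        (fun u hu => hz u (by simp at hu; omega)) fun p => by
          rw [cast_fire_apply hen]
          linarith [heq p, hmb' p, hzy p]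
      refine ⟨(t, y) :: σ, m'', .cons htE hy hmb' hσ, ?_⟩
      rw [projSeq_cons_of_mem htE, ← hphi]
      rfl
    · have htI : t ∈ TI :=
        ((Set.mem_union _ _ _).mp (hcover ▸ Set.mem_univ t)).resolve_left htE
      obtain ⟨σ, m'', hσ, hphi⟩ := ih (mb := mb) (z := z + Pi.single t 1)
        (fun u hu => by rcases eq_or_ne u t with rfl | hne <;> simp_all) fun p => by
          rw [cast_fire_apply hen, effect_add, effect_single, heq p]
          ring
      exact ⟨σ, m'', hσ, by rw [projSeq_cons_of_notMem htE, hphi]⟩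

end PetriNet

theorem brg_phi_language_eq_projection_general
    {P T : Type} [Fintype T] [DecidableEq T]
    (N : PetriNet P T) (m0 : P → ℕ)
    (TE TI : Set T) [DecidablePred (· ∈ TE)]
    (hcover : TE ∪ TI = Set.univ) (hdisj : Disjoint TE TI)
    (hacyc : N.SubnetAcyclic TI) :
    PetriNet.phi '' N.brgLang TE TI m0 = PetriNet.projSeq TE '' N.lang m0 := by
  ext x
  constructor
  · rintro ⟨σ, ⟨m', hσ⟩, rfl⟩
    obtain ⟨s, hs, hproj⟩ := hσ.exists_fireSeq hdisj
    exact ⟨s, ⟨m', hs⟩, hproj⟩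
  · rintro ⟨s, ⟨m', hs⟩, rfl⟩
    obtain ⟨σ, m'', hσ, hphi⟩ :=
      hs.exists_brgPath hcover hacyc (mb := m0) (z := 0) (by simp) (by simp)
    exact ⟨σ, ⟨m'', hσ⟩, hphi⟩

/-- For a bounded LPNS with `T = T_E ∪ T_I` and acyclic `T_I`-induced subnet,
`φ(L(G)) = P_E(L(N, m0))`. -/
theorem brg_phi_language_eq_projection
    {P T A : Type} [Fintype P] [Fintype T] [DecidableEq T]
    (N : PetriNet P T) (m0 : P → ℕ) (l : T → A)
    (TE TI : Set T) [DecidablePred (· ∈ TE)]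
    (hcover : TE ∪ TI = Set.univ) (hdisj : Disjoint TE TI)
    (hbound : N.Bounded m0)
    (hacyc : N.SubnetAcyclic TI) :
    PetriNet.phi '' N.brgLang TE TI m0 = PetriNet.projSeq TE '' N.lang m0 :=
  brg_phi_language_eq_projection_general N m0 TE TI hcover hdisj hacyc
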